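/- Let A, B be positive operators and X a bounded operator on H. The block operator [[A, X],[X*, B]] is positive if and only if |⟨x, Xy⟩|² ≤ ⟨x, Ax⟩·⟨y, By⟩ for all x, y ∈ H. -/

import Mathlib

/-!
If the block operator `T` is positive, then `(p, q) ↦ ⟪p, T q⟫` is a semi-inner product on
`H ⊕ H`, and its Cauchy–Schwarz inequality at `p = (x, 0)`, `q = (0, y)` is the claimed one.
Conversely `T` is self-adjoint and `re ⟪(x, y), T (x, y)⟫ = a + 2 re c + b` with
`a = ⟪x, A x⟫`, `b = ⟪y, B y⟫`, `c = ⟪x, X y⟫`; from `|c|² ≤ a b` AM–GM gives `2 |c| ≤ a + b`.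
-/

open ContinuousLinearMap

variable {H : Type*} [NormedAddCommGroup H] [InnerProductSpace ℂ H] [CompleteSpace H]

/-- The 2×2 block operator `[[A, X],[Y, B]]` acting on the Hilbert space `H ⊕ H`
(realized as `WithLp 2 (H × H)`). -/
noncomputable def blockOperator (A X Y B : H →L[ℂ] H) :
    WithLp 2 (H × H) →L[ℂ] WithLp 2 (H × H) :=
  (WithLp.prodContinuousLinearEquiv 2 ℂ H H).symm.toContinuousLinearMap ∘L
    ((A ∘L ContinuousLinearMap.fst ℂ H H + X ∘L ContinuousLinearMap.snd ℂ H H).prod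
      (Y ∘L ContinuousLinearMap.fst ℂ H H + B ∘L ContinuousLinearMap.snd ℂ H H)) ∘L
    (WithLp.prodContinuousLinearEquiv 2 ℂ H H).toContinuousLinearMap

section PositiveOperator

variable {𝕜 E : Type*} [RCLike 𝕜] [NormedAddCommGroup E] [InnerProductSpace 𝕜 E]

abbrev LinearMap.IsPositive.preInnerProductSpaceCore {T : E →ₗ[𝕜] E} (hT : T.IsPositive) :
    PreInnerProductSpace.Core 𝕜 E where
  inner x y := inner 𝕜 x (T y)
  conj_inner_symm x y := by rw [inner_conj_symm, hT.isSymmetric]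
  re_inner_nonneg := hT.re_inner_nonneg_right
  add_left _ _ _ := inner_add_left ..
  smul_left _ _ _ := inner_smul_left ..

theorem LinearMap.IsPositive.norm_inner_sq_le {T : E →ₗ[𝕜] E} (hT : T.IsPositive) (x y : E) :
    ‖inner 𝕜 x (T y)‖ ^ 2 ≤ RCLike.re (inner 𝕜 x (T x)) * RCLike.re (inner 𝕜 y (T y)) := by
  have h := InnerProductSpace.Core.inner_mul_inner_self_le
    (c := hT.preInnerProductSpaceCore) x y
  change ‖inner 𝕜 x (T y)‖ * ‖inner 𝕜 y (T x)‖ ≤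
    RCLike.re (inner 𝕜 x (T x)) * RCLike.re (inner 𝕜 y (T y)) at h
  rwa [← hT.isSymmetric y x, norm_inner_symm (T y), ← sq] at h

end PositiveOperator

theorem inner_blockOperator_apply {E : Type*} [NormedAddCommGroup E] [InnerProductSpace ℂ E]
    (A X Y B : E →L[ℂ] E) (p q : WithLp 2 (E × E)) :
    inner ℂ p (blockOperator A X Y B q) =
      inner ℂ p.fst (A q.fst) + inner ℂ p.fst (X q.snd) +
        inner ℂ p.snd (Y q.fst) + inner ℂ p.snd (B q.snd) := by
  have h_fst : (blockOperator A X Y B q).fst = A q.fst + X q.snd := rfl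
  have h_snd : (blockOperator A X Y B q).snd = Y q.fst + B q.snd := rfl
  simp only [WithLp.prod_inner_apply, WithLp.ofLp_fst, WithLp.ofLp_snd, h_fst, h_snd,
    inner_add_right]
  ring

theorem adjoint_blockOperator (A X Y B : H →L[ℂ] H) :
    adjoint (blockOperator A X Y B) =
      blockOperator (adjoint A) (adjoint Y) (adjoint X) (adjoint B) := by
  refine ((eq_adjoint_iff _ _).2 fun p q => ?_).symm
  rw [← inner_conj_symm, inner_blockOperator_apply, inner_blockOperator_apply]
  simp only [map_add, inner_conj_symm, adjoint_inner_right]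
  ring

theorem isSelfAdjoint_blockOperator {A B : H →L[ℂ] H} (hA : IsSelfAdjoint A)
    (hB : IsSelfAdjoint B) (X : H →L[ℂ] H) :
    IsSelfAdjoint (blockOperator A X (adjoint X) B) := by
  rw [isSelfAdjoint_iff', adjoint_blockOperator, adjoint_adjoint, hA.adjoint_eq, hB.adjoint_eq]

theorem re_inner_blockOperator_self (A B X : H →L[ℂ] H) (p : WithLp 2 (H × H)) :
    (inner ℂ p (blockOperator A X (adjoint X) B p)).re =
      (inner ℂ p.fst (A p.fst)).re + 2 * (inner ℂ p.fst (X p.snd)).re +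
        (inner ℂ p.snd (B p.snd)).re := by
  rw [inner_blockOperator_apply, adjoint_inner_right, ← inner_conj_symm (X p.snd)]
  simp only [Complex.add_re, Complex.conj_re]
  ring

/-- A generalized Cauchy–Schwarz inequality: for positive `A, B`,
`[[A, X],[X*, B]] ≥ 0` iff `|⟨x, X y⟩|² ≤ ⟨x, A x⟩ ⟨y, B y⟩` for all `x, y`. -/
theorem blockOperator_isPositive_iff_cauchy_schwarz
    (A B X : H →L[ℂ] H) (hA : A.IsPositive) (hB : B.IsPositive) :
    (blockOperator A X (adjoint X) B).IsPositive ↔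
      ∀ x y : H, ‖(inner ℂ x (X y) : ℂ)‖ ^ 2 ≤
        (inner ℂ x (A x) : ℂ).re * (inner ℂ y (B y) : ℂ).re := by
  constructor
  · intro hT x y
    have h := hT.toLinearMap.norm_inner_sq_le (WithLp.toLp 2 (x, 0)) (WithLp.toLp 2 (0, y))
    simp only [coe_coe, inner_blockOperator_apply] at h
    simpa using h
  · intro hXAB
    refine isPositive_def'.2 ⟨isSelfAdjoint_blockOperator hA.isSelfAdjoint hB.isSelfAdjoint X,
      fun p => ?_⟩
    rw [reApplyInnerSelf_apply, inner_re_symm, RCLike.re_to_complex, re_inner_blockOperator_self]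
    have h_am_gm := two_mul_le_add_of_sq_le_mul (hA.re_inner_nonneg_right p.fst)
      (hB.re_inner_nonneg_right p.snd) (hXAB p.fst p.snd)
    rw [RCLike.re_to_complex, RCLike.re_to_complex] at h_am_gm
    linarith [(neg_le_abs _).trans (Complex.abs_re_le_norm (inner ℂ p.fst (X p.snd)))]
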